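/- Let G be a group, (U_g, ω) a projective unitary representation of G on ℂⁿ, V a unitary complex matrix indexed by Fin n × Fin e satisfying (U_g ⊗ 1_e) · V = V · (U_g ⊗ 1_e) for all g ∈ G, and σ an e×e complex matrix. Define Λ(X) = Tr_E[ V · (X ⊗ σ) · Vᴴ ] for n×n matrices X, where Tr_E denotes the partial trace over the second factor. Then Λ is (U,U)-strong covariant: Λ(U_g · X) = U_g · Λ(X) for all g ∈ G and all n×n complex matrices X. -/
import Mathlib


open Matrix
open scoped Kronecker

/-- The partial trace over the second (environment) tensor factor. -/
noncomputable def partialTraceE {n e : ℕ} (M : Matrix (Fin n × Fin e) (Fin n × Fin e) ℂ) :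
    Matrix (Fin n) (Fin n) ℂ :=
  Matrix.of fun i j => ∑ k : Fin e, M (i, k) (j, k)


lemma partialTraceE_kron_one_mul {n e : ℕ} (A : Matrix (Fin n) (Fin n) ℂ)
    (M : Matrix (Fin n × Fin e) (Fin n × Fin e) ℂ) :
    partialTraceE ((A ⊗ₖ (1 : Matrix (Fin e) (Fin e) ℂ)) * M) = A * partialTraceE M := by
  ext i j
  simp only [partialTraceE, Matrix.of_apply, Matrix.mul_apply, Matrix.kroneckerMap_apply,
    Matrix.one_apply, Fintype.sum_prod_type, mul_ite, mul_one, mul_zero, ite_mul, zero_mul,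
    Finset.sum_ite_eq', Finset.mem_univ, if_true]
  rw [Finset.sum_comm]
  refine Finset.sum_congr rfl fun a _ => ?_
  rw [Finset.mul_sum]
  exact Finset.sum_congr rfl fun k _ => by simp [Finset.sum_ite_eq, eq_comm]

/-- **A unitary dilation commuting with `U_g ⊗ 1` yields a strong covariant channel.** -/
theorem dilation_strong_covariant
    {G : Type*} [Group G] {n e : ℕ}
    (U : G → Matrix (Fin n) (Fin n) ℂ) (ω : G → G → ℂ)
    (hUunit : ∀ g, (U g)ᴴ * U g = 1)
    (hUmul : ∀ g h, U g * U h = ω g h • U (g * h))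
    (hUone : U 1 = 1)
    (V : Matrix (Fin n × Fin e) (Fin n × Fin e) ℂ)
    (hVunit : Vᴴ * V = 1) (hVunit' : V * Vᴴ = 1)
    (hVcomm : ∀ g : G,
      (U g ⊗ₖ (1 : Matrix (Fin e) (Fin e) ℂ)) * V = V * (U g ⊗ₖ (1 : Matrix (Fin e) (Fin e) ℂ)))
    (σ : Matrix (Fin e) (Fin e) ℂ) :
    ∀ (g : G) (X : Matrix (Fin n) (Fin n) ℂ),
      partialTraceE (V * ((U g * X) ⊗ₖ σ) * Vᴴ) = U g * partialTraceE (V * (X ⊗ₖ σ) * Vᴴ) := by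
  intro g X
  have h1 : (U g * X) ⊗ₖ σ = (U g ⊗ₖ (1 : Matrix (Fin e) (Fin e) ℂ)) * (X ⊗ₖ σ) := by
    rw [← Matrix.mul_kronecker_mul, one_mul]
  rw [h1, ← Matrix.mul_assoc, ← hVcomm g, Matrix.mul_assoc, Matrix.mul_assoc,
    partialTraceE_kron_one_mul, ← Matrix.mul_assoc]
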